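/- (Henze representation, univariate case) Let V be a standard half-normal random variable (V = |W| with W ~ N(0,1)) and X ~ N(0,1) independent of V. For δ ∈ (−1,1), the random variable Z = δV + √(1−δ²)·X has the skew-normal density 2φ(z)Φ(λz) with λ = δ/√(1−δ²). -/

import Mathlib

open MeasureTheory Real

/-- standard normal density -/
noncomputable def stdNormalPDF (x : ℝ) : ℝ :=
  (Real.sqrt (2 * Real.pi))⁻¹ * Real.exp (-x ^ 2 / 2)

/-- standard normal CDF -/
noncomputable def stdNormalCDF (x : ℝ) : ℝ :=
  ∫ t in Set.Iic x, stdNormalPDF t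

/-- normal density with mean μ and variance σ² -/
noncomputable def normalPDF (μ σ x : ℝ) : ℝ :=
  (σ * Real.sqrt (2 * Real.pi))⁻¹ * Real.exp (-(x - μ) ^ 2 / (2 * σ ^ 2))

/-- univariate skew-normal density -/
noncomputable def skewNormalPDF (μ σ l x : ℝ) : ℝ :=
  2 * normalPDF μ σ x * stdNormalCDF (l * (x - μ) / σ)

/-- half-normal density: 2φ(v) for v ≥ 0, else 0 -/
noncomputable def halfNormalPDF (v : ℝ) : ℝ :=
  if 0 ≤ v then 2 * stdNormalPDF v else 0

/-!
Write `s = √(1 - δ²)`. The pair `(V, δV + sX)` has density `2φ(v) φ((z - δv)/s) / s` on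
`v ≥ 0`, and completing the square gives `φ(v) φ((z - δv)/s) = φ(z) φ((v - δz)/s)`: given
`δV + sX = z`, the variable `V` is a `N(δz, s²)` variable conditioned to be nonnegative.
Integrating out `v ≥ 0` therefore leaves `2φ(z)` times the probability that a `N(δz, s²)`
variable is nonnegative, which is `Φ(δz/s)`.
-/

open Set ProbabilityTheory ENNReal

lemma lintegral_comp_const_add_mul {f : ℝ → ℝ≥0∞} (hf : Measurable f) (c : ℝ) {s : ℝ}
    (hs : s ≠ 0) : ∫⁻ x, f (c + s * x) = ENNReal.ofReal |s⁻¹| * ∫⁻ u, f u := by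
  have hmap : volume.map (fun x : ℝ => c + s * x) = ENNReal.ofReal |s⁻¹| • volume := by
    rw [show (fun x : ℝ => c + s * x) = (c + ·) ∘ (s * ·) from rfl,
      ← Measure.map_map (measurable_const_add c) (measurable_const_mul s),
      Real.map_volume_mul_left hs, Measure.map_smul, map_add_left_eq_self]
  rw [← lintegral_map hf (by fun_prop), hmap, lintegral_smul_measure, smul_eq_mul]

lemma withDensity_preimage_const_add_mul {g : ℝ → ℝ≥0∞} (hg : Measurable g) (c : ℝ) {s : ℝ}
    (hs : s ≠ 0) {A : Set ℝ} (hA : MeasurableSet A) :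
    volume.withDensity g ((fun x => c + s * x) ⁻¹' A) =
      ∫⁻ u in A, ENNReal.ofReal |s⁻¹| * g ((u - c) / s) := by
  have hT : Measurable fun x : ℝ => c + s * x := by fun_prop
  have hg' : Measurable fun u : ℝ => g ((u - c) / s) := hg.comp (by fun_prop)
  rw [withDensity_apply _ (hT hA), lintegral_const_mul _ hg', ← lintegral_indicator hA,
    ← lintegral_comp_const_add_mul (hg'.indicator hA) c hs, ← lintegral_indicator (hT hA)]
  refine lintegral_congr fun x => ?_
  rw [← indicator_comp_right (fun x => c + s * x)]
  congr with y
  simp only [Function.comp_apply, add_sub_cancel_left, mul_div_cancel_left₀ _ hs]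

lemma map_const_mul_add_mul_prod_withDensity (μ : Measure ℝ) [SFinite μ] {g : ℝ → ℝ≥0∞}
    (hg : Measurable g) (a : ℝ) {s : ℝ} (hs : s ≠ 0) :
    (μ.prod (volume.withDensity g)).map (fun p => a * p.1 + s * p.2) =
      volume.withDensity (fun z => ∫⁻ v, ENNReal.ofReal |s⁻¹| * g ((z - a * v) / s) ∂μ) := by
  have hT : Measurable fun p : ℝ × ℝ => a * p.1 + s * p.2 := by fun_prop
  ext A hA
  rw [Measure.map_apply hT hA, Measure.prod_apply (hT hA), withDensity_apply _ hA]
  simp_rw [show ∀ v, Prod.mk v ⁻¹' ((fun p : ℝ × ℝ => a * p.1 + s * p.2) ⁻¹' A) =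
      (fun x => a * v + s * x) ⁻¹' A from fun v => rfl,
    withDensity_preimage_const_add_mul hg _ hs hA]
  exact lintegral_lintegral_swap (by fun_prop)

lemma stdNormalPDF_eq_gaussianPDFReal : stdNormalPDF = gaussianPDFReal 0 1 := by
  ext x
  simp [stdNormalPDF, gaussianPDFReal]

lemma stdNormalPDF_nonneg (x : ℝ) : 0 ≤ stdNormalPDF x := by
  unfold stdNormalPDF
  positivity

lemma stdNormalPDF_neg (x : ℝ) : stdNormalPDF (-x) = stdNormalPDF x := by
  simp [stdNormalPDF]

@[fun_prop]
lemma measurable_stdNormalPDF : Measurable stdNormalPDF := by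
  unfold stdNormalPDF
  fun_prop

lemma normalPDF_zero_one : normalPDF 0 1 = stdNormalPDF := by
  ext x
  simp [normalPDF, stdNormalPDF]

lemma withDensity_stdNormalPDF_Iic (x : ℝ) :
    volume.withDensity (fun t => ENNReal.ofReal (stdNormalPDF t)) (Iic x) =
      ENNReal.ofReal (stdNormalCDF x) := by
  have hint : Integrable stdNormalPDF := by
    rw [stdNormalPDF_eq_gaussianPDFReal]
    exact integrable_gaussianPDFReal 0 1
  rw [withDensity_apply _ measurableSet_Iic, stdNormalCDF,
    ofReal_integral_eq_lintegral_ofReal hint.integrableOn (ae_of_all _ stdNormalPDF_nonneg)]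

lemma stdNormalPDF_mul_stdNormalPDF_sub_div {δ s : ℝ} (hs : s ≠ 0) (hs2 : s ^ 2 = 1 - δ ^ 2)
    (z v : ℝ) : stdNormalPDF v * stdNormalPDF ((z - δ * v) / s) =
      stdNormalPDF z * stdNormalPDF ((v - δ * z) / s) := by
  unfold stdNormalPDF
  rw [mul_mul_mul_comm, ← Real.exp_add, mul_mul_mul_comm, ← Real.exp_add]
  congr 2
  field_simp
  rw [hs2]
  ring

@[fun_prop]
lemma measurable_halfNormalPDF : Measurable halfNormalPDF :=
  Measurable.ite measurableSet_Ici (by fun_prop) measurable_const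

lemma ofReal_halfNormalPDF (v : ℝ) :
    ENNReal.ofReal (halfNormalPDF v) =
      (Ici 0).indicator (fun v => ENNReal.ofReal (2 * stdNormalPDF v)) v := by
  by_cases hv : 0 ≤ v <;> simp [halfNormalPDF, hv]

lemma lintegral_halfNormalPDF_mul_stdNormalPDF {δ s : ℝ} (hs : 0 < s)
    (hs2 : s ^ 2 = 1 - δ ^ 2) (z : ℝ) :
    ∫⁻ v, ENNReal.ofReal (halfNormalPDF v) *
        (ENNReal.ofReal |s⁻¹| * ENNReal.ofReal (stdNormalPDF ((z - δ * v) / s))) =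
      ENNReal.ofReal (skewNormalPDF 0 1 (δ / s) z) := by
  have two_pdf_nonneg (t : ℝ) : 0 ≤ 2 * stdNormalPDF t := by linarith [stdNormalPDF_nonneg t]
  have hpre : (fun x => δ * z + -s * x) ⁻¹' Ici 0 = Iic (δ * z / s) := by
    ext x
    simp [le_div_iff₀ hs, mul_comm x s]
  -- reflecting by `x ↦ δz - s x` turns `Ici 0` into `Iic (δz/s)`, hence the `-s`
  calc _ = ∫⁻ v in Ici 0, ENNReal.ofReal (2 * stdNormalPDF z) *
        (ENNReal.ofReal |(-s)⁻¹| * ENNReal.ofReal (stdNormalPDF ((v - δ * z) / -s))) := by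
        rw [← lintegral_indicator measurableSet_Ici]
        refine lintegral_congr fun v => ?_
        rw [ofReal_halfNormalPDF]
        by_cases hv : v ∈ Ici 0
        · simp only [indicator_of_mem hv, inv_neg, abs_neg, div_neg, stdNormalPDF_neg]
          rw [mul_left_comm, mul_left_comm (ENNReal.ofReal (2 * _)),
            ← ENNReal.ofReal_mul (two_pdf_nonneg v), ← ENNReal.ofReal_mul (two_pdf_nonneg z),
            mul_assoc, mul_assoc, stdNormalPDF_mul_stdNormalPDF_sub_div hs.ne' hs2]
        · simp [indicator_of_notMem hv]
    _ = ENNReal.ofReal (2 * stdNormalPDF z) * ENNReal.ofReal (stdNormalCDF (δ * z / s)) := by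
        rw [lintegral_const_mul _ (by fun_prop),
          ← withDensity_preimage_const_add_mul measurable_stdNormalPDF.ennreal_ofReal _
            (neg_ne_zero.mpr hs.ne') measurableSet_Ici, hpre, withDensity_stdNormalPDF_Iic]
    _ = _ := by
        rw [← ENNReal.ofReal_mul (two_pdf_nonneg z), skewNormalPDF, normalPDF_zero_one]
        congr 3
        ring

/-- Henze representation: if V is half-normal, X standard normal,
independent, and δ ∈ (−1,1), then Z = δV + √(1−δ²)X has skew-normal density with
λ = δ/√(1−δ²). -/
theorem henze_representation {Ω : Type*} [MeasureSpace Ω]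
    [IsProbabilityMeasure (volume : Measure Ω)]
    (V X : Ω → ℝ) (hV : Measurable V) (hX : Measurable X)
    (hInd : ProbabilityTheory.IndepFun V X (volume : Measure Ω))
    (hVlaw : Measure.map V (volume : Measure Ω) =
      volume.withDensity (fun v => ENNReal.ofReal (halfNormalPDF v)))
    (hXlaw : Measure.map X (volume : Measure Ω) =
      volume.withDensity (fun x => ENNReal.ofReal (stdNormalPDF x)))
    (δ : ℝ) (hδ : δ ∈ Set.Ioo (-1 : ℝ) 1) :
    Measure.map (fun ω => δ * V ω + Real.sqrt (1 - δ ^ 2) * X ω) (volume : Measure Ω) =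
      volume.withDensity
        (fun z => ENNReal.ofReal (skewNormalPDF 0 1 (δ / Real.sqrt (1 - δ ^ 2)) z)) := by
  set s := √(1 - δ ^ 2)
  have hδ2 : 0 < 1 - δ ^ 2 := by nlinarith [hδ.1, hδ.2]
  have hs : 0 < s := Real.sqrt_pos.mpr hδ2
  have hs2 : s ^ 2 = 1 - δ ^ 2 := Real.sq_sqrt hδ2.le
  have hjoint : (volume : Measure Ω).map (fun ω => (V ω, X ω)) =
      (volume.map V).prod (volume.map X) :=
    hInd.map_prod_eq_prod_map_map hV.aemeasurable hX.aemeasurable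
  calc (volume : Measure Ω).map (fun ω => δ * V ω + s * X ω)
      = ((volume.map V).prod (volume.map X)).map (fun p => δ * p.1 + s * p.2) := by
        rw [← hjoint, Measure.map_map (by fun_prop) (hV.prodMk hX)]
        rfl
    _ = _ := by
        rw [hVlaw, hXlaw, map_const_mul_add_mul_prod_withDensity _
          measurable_stdNormalPDF.ennreal_ofReal δ hs.ne']
        congr with z
        rw [lintegral_withDensity_eq_lintegral_mul _ (by fun_prop) (by fun_prop)]
        exact lintegral_halfNormalPDF_mul_stdNormalPDF hs hs2 z
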